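/- For r₁, r₂ ∈ ℕ with r₁, r₂ ≥ 1: r₁!·ξ_{MT,1}(𝟏_{r₂+1}; r₁+1) + r₂!·ξ_{MT,1}(𝟏_{r₁+1}; r₂+1) = ζ_{MT,r₁}(1,...,1;1)·ζ_{MT,r₂}(1,...,1;1), where 𝟏_{n} denotes a tuple of n ones. -/

import Mathlib

/-!
Put `q = 1 - e^{-t}`, so that `t ^ r₁ = (-log (1 - q)) ^ r₁ = ∑_m q^{|m|} / (m₁ ⋯ m_{r₁})`.
Multiplying by `Λ_{𝟏_{r₂+1}}(q) / (e^t - 1)` turns the integrand of `ξ_{MT,1}(𝟏_{r₂+1}; r₁+1)` into a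
double series of terms `e^{-t} q^{|m|+|n|-1}` with nonnegative coefficients, and
`∫₀^∞ e^{-t} q^{k-1} dt = 1/k` evaluates it termwise: since `Γ(r₁+1) = r₁!`,
`r₁! ξ_{MT,1}(𝟏_{r₂+1}; r₁+1) = ∑_{m,n} 1 / (m₁ ⋯ m_{r₁} · n₁ ⋯ n_{r₂} · |n| · (|m| + |n|))`.
Adding the same sum with `r₁, r₂` exchanged, the partial fractions
`1/(|n| (|m|+|n|)) + 1/(|m| (|m|+|n|)) = 1/(|m| |n|)` give `ζ_{MT,r₁}(1,…,1;1) ζ_{MT,r₂}(1,…,1;1)`.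
-/

open scoped BigOperators

/-- `Λ_{𝟏_{r+1}}(z) = ∑_{m₁,…,m_r ≥ 1} z^{m₁+⋯+m_r}/(m₁⋯m_r(m₁+⋯+m_r))`. -/
noncomputable def LamOnes (r : ℕ) (z : ℂ) : ℂ :=
  ∑' m : Fin r → ℕ+,
    z ^ (∑ j, (m j : ℕ)) /
      ((∏ j, ((m j : ℕ) : ℂ)) * (((∑ j, (m j : ℕ)) : ℕ) : ℂ))

/-- `ξ_{MT,1}(𝟏_{r+1}; s)`. -/
noncomputable def xiMT1 (r : ℕ) (s : ℂ) : ℂ :=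
  (1 / Complex.Gamma s) *
    ∫ t in Set.Ioi (0 : ℝ),
      (t : ℂ) ^ (s - 1) / ((Real.exp t : ℂ) - 1) * LamOnes r (1 - Real.exp (-t))

/-- `ζ_{MT,r}(1,…,1;1)`. -/
noncomputable def zMTones (r : ℕ) : ℂ :=
  ∑' m : Fin r → ℕ+,
    1 / ((∏ j, ((m j : ℕ) : ℂ)) * (((∑ j, (m j : ℕ)) : ℕ) : ℂ))

open Real MeasureTheory Set Filter

theorem HasSum.mul_of_nonneg {ι κ : Type*} {f : ι → ℝ} {g : κ → ℝ} {a b : ℝ}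
    (hf : HasSum f a) (hg : HasSum g b) (hf0 : 0 ≤ f) (hg0 : 0 ≤ g) :
    HasSum (fun p : ι × κ => f p.1 * g p.2) (a * b) :=
  hf.mul hg (hf.summable.mul_of_nonneg hg.summable hf0 hg0)

theorem hasSum_prod_fin_of_nonneg {α : Type*} {g : α → ℝ} {a : ℝ} (hg : HasSum g a)
    (hg0 : 0 ≤ g) (r : ℕ) : HasSum (fun m : Fin r → α => ∏ j, g (m j)) (a ^ r) := by
  induction r with
  | zero => simp
  | succ n ih =>
    have hcons := hg.mul_of_nonneg ih hg0 fun m => Finset.prod_nonneg fun j _ => hg0 _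
    rw [pow_succ']
    refine (Fin.consEquiv fun _ => α).hasSum_iff.mp (hcons.congr_fun fun p => ?_)
    simp [Fin.consEquiv, Fin.prod_univ_succ]

noncomputable section MultiIndex

variable {r : ℕ}

def idxSum (m : Fin r → ℕ+) : ℕ := ∑ j, (m j : ℕ)

def idxProd (m : Fin r → ℕ+) : ℝ := ∏ j, ((m j : ℕ) : ℝ)

theorem one_le_idxSum (hr : 1 ≤ r) (m : Fin r → ℕ+) : 1 ≤ idxSum m :=
  (m ⟨0, hr⟩).pos.trans_le
    (Finset.single_le_sum (f := fun j => (m j : ℕ)) (fun _ _ => Nat.zero_le _)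
      (Finset.mem_univ _))

theorem idxProd_pos (m : Fin r → ℕ+) : 0 < idxProd m :=
  Finset.prod_pos fun j _ => by exact_mod_cast (m j).pos

theorem idxProd_le_idxSum_pow (m : Fin r → ℕ+) : idxProd m ≤ (idxSum m : ℝ) ^ r := by
  calc idxProd m ≤ ∏ _j : Fin r, (idxSum m : ℝ) :=
        Finset.prod_le_prod (fun _ _ => by positivity) fun j _ => by
          exact_mod_cast Finset.single_le_sum (f := fun j => (m j : ℕ))
            (fun _ _ => Nat.zero_le _) (Finset.mem_univ j)
    _ = (idxSum m : ℝ) ^ r := by simp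

theorem hasSum_pow_idxSum_div_idxProd {q : ℝ} (hq0 : 0 ≤ q) (hq1 : q < 1) :
    HasSum (fun m : Fin r → ℕ+ => q ^ idxSum m / idxProd m) ((-log (1 - q)) ^ r) := by
  have hlog : HasSum (fun n : ℕ+ => q ^ (n : ℕ) / (n : ℕ)) (-log (1 - q)) := by
    refine Equiv.pnatEquivNat.symm.hasSum_iff.mp ?_
    convert hasSum_pow_div_log_of_abs_lt_one (abs_lt.mpr ⟨by linarith, hq1⟩) using 2 with n
    simp [Nat.succPNat]
  refine (hasSum_prod_fin_of_nonneg hlog (fun n => by positivity) r).congr_fun fun m => ?_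
  rw [idxSum, idxProd, Finset.prod_div_distrib, Finset.prod_pow_eq_pow_sum]

def mtTerm (q : ℝ) (m : Fin r → ℕ+) : ℝ := q ^ idxSum m / (idxProd m * idxSum m)

theorem mtTerm_nonneg {q : ℝ} (hq : 0 ≤ q) (m : Fin r → ℕ+) : 0 ≤ mtTerm q m := by
  unfold mtTerm idxProd; positivity

/-- Since `idxProd m ≤ |m|^r`, the term `1 / (idxProd m * |m|)` is at most
`idxProd m ^ (-(1 + 1/r))`, which factors into a convergent `r`-fold product. -/
theorem summable_mtTerm_one (hr : 1 ≤ r) : Summable (mtTerm 1 : (Fin r → ℕ+) → ℝ) := by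
  set σ : ℝ := -(1 + (r : ℝ)⁻¹)
  have hσ : Summable fun n : ℕ+ => ((n : ℕ) : ℝ) ^ σ := by
    have : (0 : ℝ) < (r : ℝ)⁻¹ := by positivity
    exact (Real.summable_nat_rpow.mpr (by linarith)).comp_injective PNat.coe_injective
  refine .of_nonneg_of_le (mtTerm_nonneg zero_le_one) (fun m => ?_)
    (hasSum_prod_fin_of_nonneg hσ.hasSum (fun n => by positivity) r).summable
  have := idxProd_pos m
  have hroot : idxProd m ^ (r : ℝ)⁻¹ ≤ idxSum m := by
    calc idxProd m ^ (r : ℝ)⁻¹ ≤ ((idxSum m : ℝ) ^ r) ^ (r : ℝ)⁻¹ := by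
          gcongr; exact idxProd_le_idxSum_pow m
      _ = idxSum m := Real.pow_rpow_inv_natCast (by positivity) (by omega)
  rw [Real.finsetProd_rpow _ _ (fun _ _ => by positivity), ← idxProd, mtTerm, one_pow,
    Real.rpow_neg (by positivity), Real.rpow_add (by positivity), Real.rpow_one, one_div]
  gcongr

theorem summable_mtTerm (hr : 1 ≤ r) {q : ℝ} (hq0 : 0 ≤ q) (hq1 : q ≤ 1) :
    Summable (mtTerm q : (Fin r → ℕ+) → ℝ) :=
  (summable_mtTerm_one hr).of_nonneg_of_le (mtTerm_nonneg hq0) fun m => by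
    unfold mtTerm idxProd
    gcongr

theorem LamOnes_ofReal (r : ℕ) (q : ℝ) : LamOnes r q = ↑(∑' m : Fin r → ℕ+, mtTerm q m) := by
  rw [Complex.ofReal_tsum, LamOnes]
  congr! with m
  simp [mtTerm, idxSum, idxProd]

theorem zMTones_eq_ofReal (r : ℕ) : zMTones r = ↑(∑' m : Fin r → ℕ+, mtTerm 1 m) := by
  simpa [zMTones, LamOnes] using LamOnes_ofReal r 1

end MultiIndex

section ExpIntegral

theorem integrableOn_exp_neg_mul_one_sub_exp_neg_pow (k : ℕ) :
    IntegrableOn (fun t : ℝ => exp (-t) * (1 - exp (-t)) ^ k) (Ioi 0) := by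
  refine (exp_neg_integrableOn_Ioi 0 one_pos).mono' (by fun_prop) ?_
  filter_upwards [self_mem_ae_restrict measurableSet_Ioi] with t ht
  have hq1 : exp (-t) ≤ 1 := exp_le_one_iff.mpr (by simp [(mem_Ioi.mp ht).le])
  have hq0 : 0 ≤ 1 - exp (-t) := by linarith
  rw [norm_of_nonneg (by positivity), neg_one_mul]
  exact mul_le_of_le_one_right (exp_pos _).le (pow_le_one₀ hq0 (by linarith [exp_pos (-t)]))

theorem integral_exp_neg_mul_one_sub_exp_neg_pow (k : ℕ) :
    ∫ t in Ioi (0 : ℝ), exp (-t) * (1 - exp (-t)) ^ k = 1 / (k + 1) := by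
  have hderiv (t : ℝ) : HasDerivAt (fun t : ℝ => (1 - exp (-t)) ^ (k + 1) / (k + 1))
      (exp (-t) * (1 - exp (-t)) ^ k) t := by
    refine ((((hasDerivAt_neg t).exp.const_sub 1).pow (k + 1)).div_const _).congr_deriv ?_
    rw [Nat.add_sub_cancel]
    push_cast
    field_simp
  have hlim : Tendsto (fun t : ℝ => (1 - exp (-t)) ^ (k + 1) / (k + 1)) atTop
      (nhds (1 / (k + 1))) := by
    simpa using (((tendsto_exp_neg_atTop_nhds_zero.const_sub 1).pow (k + 1)).div_const
      ((k : ℝ) + 1))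
  simpa using integral_Ioi_of_hasDerivAt_of_tendsto' (fun t _ => hderiv t)
    (integrableOn_exp_neg_mul_one_sub_exp_neg_pow k) hlim

theorem integral_tsum_mul_exp_neg_mul_one_sub_exp_neg_pow {ι : Type*} [Countable ι]
    {c : ι → ℝ} (k : ι → ℕ) (hc : 0 ≤ c) (hs : Summable fun i => c i / (k i + 1)) :
    ∫ t in Ioi (0 : ℝ), ∑' i, c i * (exp (-t) * (1 - exp (-t)) ^ k i) =
      ∑' i, c i / (k i + 1) := by
  have hint (i : ι) := (integrableOn_exp_neg_mul_one_sub_exp_neg_pow (k i)).const_mul (c i)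
  have hval (i : ι) : ∫ t in Ioi (0 : ℝ), c i * (exp (-t) * (1 - exp (-t)) ^ k i) =
      c i / (k i + 1) := by
    rw [integral_const_mul, integral_exp_neg_mul_one_sub_exp_neg_pow, mul_one_div]
  have hnorm (i : ι) : ∫ t in Ioi (0 : ℝ), ‖c i * (exp (-t) * (1 - exp (-t)) ^ k i)‖ =
      c i / (k i + 1) := by
    rw [← hval, setIntegral_congr_fun measurableSet_Ioi fun t ht => ?_]
    have : exp (-t) ≤ 1 := exp_le_one_iff.mpr (by simp [(mem_Ioi.mp ht).le])
    have : 0 ≤ 1 - exp (-t) := by linarith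
    exact norm_of_nonneg (mul_nonneg (hc i) (by positivity))
  rw [← integral_tsum_of_summable_integral_norm hint (by simpa only [hnorm] using hs)]
  exact tsum_congr hval

end ExpIntegral

noncomputable section XiValue

variable {r₁ r₂ : ℕ}

def xiTerm (p : (Fin r₁ → ℕ+) × (Fin r₂ → ℕ+)) : ℝ :=
  1 / (idxProd p.1 * idxProd p.2 * idxSum p.2 * (idxSum p.1 + idxSum p.2))

theorem summable_xiTerm (h₁ : 1 ≤ r₁) (h₂ : 1 ≤ r₂) :
    Summable (xiTerm : (Fin r₁ → ℕ+) × (Fin r₂ → ℕ+) → ℝ) := by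
  refine .of_nonneg_of_le (fun p => by unfold xiTerm idxProd; positivity) (fun p => ?_)
    ((summable_mtTerm_one h₁).mul_of_nonneg (summable_mtTerm_one h₂)
      (mtTerm_nonneg zero_le_one) (mtTerm_nonneg zero_le_one))
  have := idxProd_pos p.1
  have := idxProd_pos p.2
  have : (0 : ℝ) < idxSum p.1 := by exact_mod_cast one_le_idxSum h₁ p.1
  have : (0 : ℝ) < idxSum p.2 := by exact_mod_cast one_le_idxSum h₂ p.2
  simp only [xiTerm, mtTerm, one_pow, div_mul_div_comm, one_mul]
  gcongr 1 / ?_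
  calc idxProd p.1 * idxSum p.1 * (idxProd p.2 * idxSum p.2)
      = idxProd p.1 * idxProd p.2 * idxSum p.2 * idxSum p.1 := by ring
    _ ≤ _ := by gcongr; exact le_add_of_nonneg_right (Nat.cast_nonneg _)

theorem xiTerm_add_xiTerm_swap (h₁ : 1 ≤ r₁) (h₂ : 1 ≤ r₂)
    (p : (Fin r₁ → ℕ+) × (Fin r₂ → ℕ+)) :
    xiTerm p + xiTerm p.swap = mtTerm 1 p.1 * mtTerm 1 p.2 := by
  have := idxProd_pos p.1
  have := idxProd_pos p.2
  have : (0 : ℝ) < idxSum p.1 := by exact_mod_cast one_le_idxSum h₁ p.1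
  have : (0 : ℝ) < idxSum p.2 := by exact_mod_cast one_le_idxSum h₂ p.2
  simp only [xiTerm, mtTerm, Prod.fst_swap, Prod.snd_swap, one_pow]
  field_simp
  ring

theorem pow_div_exp_sub_one_mul_tsum_mtTerm (h₁ : 1 ≤ r₁) (h₂ : 1 ≤ r₂) {t : ℝ} (ht : 0 < t) :
    t ^ r₁ / (exp t - 1) * ∑' n : Fin r₂ → ℕ+, mtTerm (1 - exp (-t)) n =
      ∑' p : (Fin r₁ → ℕ+) × (Fin r₂ → ℕ+),
        1 / (idxProd p.1 * idxProd p.2 * idxSum p.2) *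
          (exp (-t) * (1 - exp (-t)) ^ (idxSum p.1 + idxSum p.2 - 1)) := by
  set q := 1 - exp (-t) with hq
  have hq0 : 0 < q := by linarith [exp_lt_one_iff.mpr (neg_lt_zero.mpr ht)]
  have hq1 : q < 1 := by linarith [exp_pos (-t)]
  have hpow : HasSum (fun m : Fin r₁ → ℕ+ => q ^ idxSum m / idxProd m) (t ^ r₁) := by
    simpa [hq] using hasSum_pow_idxSum_div_idxProd (r := r₁) hq0.le hq1
  have hprod := (hpow.mul_of_nonneg (summable_mtTerm h₂ hq0.le hq1.le).hasSum
    (fun m => by have := idxProd_pos m; positivity) (mtTerm_nonneg hq0.le)).mul_right (exp (-t) / q)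
  have hexp : exp t - 1 = q / exp (-t) := by
    rw [hq, exp_neg]; field_simp
  rw [hexp, div_div_eq_mul_div, mul_div_assoc, mul_right_comm, ← hprod.tsum_eq]
  refine tsum_congr fun p => ?_
  obtain ⟨k, hk⟩ : ∃ k, idxSum p.1 + idxSum p.2 = k + 1 :=
    ⟨_, (Nat.succ_pred_eq_of_pos (by have := one_le_idxSum h₁ p.1; omega)).symm⟩
  rw [mtTerm, div_mul_div_comm, ← pow_add, hk, Nat.add_sub_cancel, pow_succ]
  field_simp

theorem factorial_mul_xiMT1 (h₁ : 1 ≤ r₁) (h₂ : 1 ≤ r₂) :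
    (r₁.factorial : ℂ) * xiMT1 r₂ ((r₁ : ℂ) + 1) =
      ↑(∑' p : (Fin r₁ → ℕ+) × (Fin r₂ → ℕ+), xiTerm p) := by
  set c : (Fin r₁ → ℕ+) × (Fin r₂ → ℕ+) → ℝ := fun p => 1 / (idxProd p.1 * idxProd p.2 * idxSum p.2)
  set k : (Fin r₁ → ℕ+) × (Fin r₂ → ℕ+) → ℕ := fun p => idxSum p.1 + idxSum p.2 - 1
  have hterm (p : (Fin r₁ → ℕ+) × (Fin r₂ → ℕ+)) : c p / (k p + 1) = xiTerm p := by
    have : 1 ≤ idxSum p.1 := one_le_idxSum h₁ p.1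
    simp only [c, k, xiTerm, div_div, Nat.cast_sub (by omega : 1 ≤ idxSum p.1 + idxSum p.2)]
    push_cast
    ring_nf
  have hintegrand : ∀ t ∈ Ioi (0 : ℝ), (t : ℂ) ^ ((r₁ : ℂ) + 1 - 1) / (exp t - 1) *
      LamOnes r₂ (1 - exp (-t)) = ↑(∑' p, c p * (exp (-t) * (1 - exp (-t)) ^ k p)) := by
    intro t ht
    have harg : (1 : ℂ) - ↑(exp (-t)) = ↑(1 - exp (-t)) := by push_cast; ring
    rw [← pow_div_exp_sub_one_mul_tsum_mtTerm h₁ h₂ ht, add_sub_cancel_right,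
      Complex.cpow_natCast, harg, LamOnes_ofReal]
    push_cast
    rfl
  have hc : 0 ≤ c := fun p => by unfold c idxProd; positivity
  rw [xiMT1, Complex.Gamma_nat_eq_factorial, setIntegral_congr_fun measurableSet_Ioi hintegrand,
    integral_complex_ofReal, integral_tsum_mul_exp_neg_mul_one_sub_exp_neg_pow k hc
      (by simpa only [hterm] using summable_xiTerm h₁ h₂)]
  simp only [hterm, one_div]
  exact mul_inv_cancel_left₀ (by exact_mod_cast r₁.factorial_ne_zero) _

end XiValue

theorem stmt_17 (r₁ r₂ : ℕ) (h₁ : 1 ≤ r₁) (h₂ : 1 ≤ r₂) :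
    (r₁.factorial : ℂ) * xiMT1 r₂ ((r₁ : ℂ) + 1)
        + (r₂.factorial : ℂ) * xiMT1 r₁ ((r₂ : ℂ) + 1) =
      zMTones r₁ * zMTones r₂ := by
  let swap := Equiv.prodComm (Fin r₁ → ℕ+) (Fin r₂ → ℕ+)
  have hprod := (summable_mtTerm_one h₁).hasSum.mul_of_nonneg (summable_mtTerm_one h₂).hasSum
    (mtTerm_nonneg zero_le_one) (mtTerm_nonneg zero_le_one)
  have hswap : Summable fun p => xiTerm (swap p) := swap.summable_iff.mpr (summable_xiTerm h₂ h₁)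
  rw [factorial_mul_xiMT1 h₁ h₂, factorial_mul_xiMT1 h₂ h₁, zMTones_eq_ofReal, zMTones_eq_ofReal,
    ← Complex.ofReal_add, ← Complex.ofReal_mul, Complex.ofReal_inj, ← swap.tsum_eq xiTerm,
    ← (summable_xiTerm h₁ h₂).tsum_add hswap, ← hprod.tsum_eq]
  exact tsum_congr (xiTerm_add_xiTerm_swap h₁ h₂)
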